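/- Let H be a numerical semigroup such that R = K[[H]] is far-flung Gorenstein with Cohen-Macaulay type r = |PF(H)|. Then e(H) ≤ n̄(r), where n̄(r) is the solution to the Rohrbach problem: the maximum over all r-element sets A of nonnegative integers of the largest n such that {0, 1, ..., n-1} ⊆ A + A. -/

import Mathlib

set_option synthInstance.maxHeartbeats 400000

open PowerSeries

/-- The numerical semigroup ring `K[[H]] = K[[tʰ : h ∈ H]] ⊆ K[[t]]`: the subalgebra of
power series supported on `H`. -/
noncomputable def sgRing (K : Type*) [Field K] (H : AddSubmonoid ℕ) :
    Subalgebra K (PowerSeries K) where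
  carrier := {f | ∀ n : ℕ, n ∉ H → PowerSeries.coeff n f = 0}
  mul_mem' := by
    intro f g hf hg n hn
    rw [PowerSeries.coeff_mul]
    apply Finset.sum_eq_zero
    rintro ⟨i, j⟩ hij
    rw [Finset.HasAntidiagonal.mem_antidiagonal] at hij
    by_cases hi : i ∈ H
    · have hj : j ∉ H := fun hj => hn (hij ▸ H.add_mem hi hj)
      simp [hg j hj]
    · simp [hf i hi]
  add_mem' := by
    intro f g hf hg n hn
    simp [hf n hn, hg n hn]
  one_mem' := by
    intro n hn
    have h0 : n ≠ 0 := fun h => hn (h ▸ H.zero_mem)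
    simp [PowerSeries.coeff_one, h0]
  algebraMap_mem' := by
    intro k n hn
    have h0 : n ≠ 0 := fun h => hn (h ▸ H.zero_mem)
    simp [PowerSeries.algebraMap_apply, PowerSeries.coeff_C, h0]

/-- The set of pseudo-Frobenius numbers
`PF(H) = {x ∈ ℤ \ H : x + h ∈ H for all 0 ≠ h ∈ H}`. -/
def pseudoFrobenius (H : AddSubmonoid ℕ) : Set ℤ :=
  {x : ℤ | x ∉ (Nat.cast '' (H : Set ℕ) : Set ℤ) ∧
    ∀ h ∈ (Nat.cast '' (H : Set ℕ) : Set ℤ), h ≠ 0 →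
      x + h ∈ (Nat.cast '' (H : Set ℕ) : Set ℤ)}

/-- The Frobenius number `F(H) = max (ℤ \ H)`. -/
noncomputable def frobeniusNumber (H : AddSubmonoid ℕ) : ℤ :=
  sSup {x : ℤ | x ∉ (Nat.cast '' (H : Set ℕ) : Set ℤ)}

/-- The fractional canonical ideal `C = Σ_{α ∈ PF(H)} K[[H]]·t^{F(H)-α}` of `K[[H]]`. -/
noncomputable def canonicalIdeal (K : Type*) [Field K] (H : AddSubmonoid ℕ) :
    Submodule ↥(sgRing K H) (PowerSeries K) :=
  Submodule.span ↥(sgRing K H)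
    ((fun α : ℤ => (PowerSeries.X : PowerSeries K) ^ (frobeniusNumber H - α).toNat) ''
      pseudoFrobenius H)

/-- `K[[H]]` is far-flung Gorenstein: `tr(ω) = R : R̄`, equivalently `C² = K[[t]]`
(the whole of `K[[t]]`, i.e. `⊤` as a `K[[H]]`-submodule of `K[[t]]`). -/
def IsFarFlungGorenstein (K : Type*) [Field K] (H : AddSubmonoid ℕ) : Prop :=
  canonicalIdeal K H * canonicalIdeal K H = ⊤

/-- Power series with support contained in a set `S` that is stable under adding
elements of `H` form a `K[[H]]`-submodule of `K[[t]]`. -/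
noncomputable def suppSubmodule (K : Type*) [Field K] (H : AddSubmonoid ℕ) (S : Set ℕ)
    (hS : ∀ h ∈ H, ∀ s ∈ S, h + s ∈ S) :
    Submodule ↥(sgRing K H) (PowerSeries K) where
  carrier := {f | ∀ n : ℕ, n ∉ S → PowerSeries.coeff n f = 0}
  add_mem' := by
    intro f g hf hg n hn
    simp [hf n hn, hg n hn]
  zero_mem' := by intro n hn; simp
  smul_mem' := by
    intro g f hf n hn
    have hg : ∀ m : ℕ, m ∉ H → PowerSeries.coeff m (g : PowerSeries K) = 0 := g.2
    have hsmul : (g • f) = (g : PowerSeries K) * f := rfl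
    rw [hsmul, PowerSeries.coeff_mul]
    apply Finset.sum_eq_zero
    rintro ⟨i, j⟩ hij
    rw [Finset.HasAntidiagonal.mem_antidiagonal] at hij
    by_cases hi : i ∈ H
    · have hj : j ∉ S := fun hj => hn (hij ▸ hS i hi j hj)
      simp [hf j hj]
    · simp [hg i hi]

/-- Let `H` be a numerical semigroup such that `R = K[[H]]` is
far-flung Gorenstein with Cohen–Macaulay type `r = |PF(H)|`. Then `e(H) ≤ n̄(r)`, where
`n̄(r)` is the solution of the Rohrbach problem: the maximum over all `r`-element sets
`A` of nonnegative integers of the largest `n` with `{0, 1, …, n-1} ⊆ A + A`. -/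
theorem farFlungGorenstein_multiplicity_le_rohrbach (K : Type*) [Field K]
    (H : AddSubmonoid ℕ) (hfin : ((H : Set ℕ)ᶜ).Finite)
    (e : ℕ) (he : IsLeast {n : ℕ | n ∈ H ∧ n ≠ 0} e)
    (hFFG : IsFarFlungGorenstein K H) :
    e ≤ sSup {n : ℕ | ∃ A : Finset ℕ, A.card = (pseudoFrobenius H).ncard ∧
      ∀ k < n, ∃ a ∈ A, ∃ b ∈ A, a + b = k} := by
  classical
  obtain ⟨⟨heH, hene⟩, helb⟩ := he
  -- a bound for the complement of H in ℕ
  obtain ⟨B, hB⟩ : BddAbove ((H : Set ℕ)ᶜ) := hfin.bddAbove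
  -- upper bound for the set of integers not in (the image of) H
  have hub : ∀ x ∈ {x : ℤ | x ∉ (Nat.cast '' (H : Set ℕ) : Set ℤ)}, x ≤ (B : ℤ) := by
    intro x hx
    by_cases hx0 : 0 ≤ x
    · obtain ⟨m, rfl⟩ := Int.eq_ofNat_of_zero_le hx0
      have hm : m ∉ H := fun hm => hx ⟨m, hm, rfl⟩
      exact_mod_cast hB hm
    · exact le_trans (le_of_not_ge hx0) (by positivity)
  have hle : ∀ α ∈ pseudoFrobenius H, α ≤ frobeniusNumber H := by
    intro α hα
    exact le_csSup ⟨(B : ℤ), hub⟩ hα.1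
  -- pseudo-Frobenius numbers are ≥ -e
  have hgeneg : ∀ α ∈ pseudoFrobenius H, -(e : ℤ) ≤ α := by
    intro α hα
    have heimg : ((e : ℤ)) ∈ (Nat.cast '' (H : Set ℕ) : Set ℤ) := ⟨e, heH, rfl⟩
    have hene' : ((e : ℤ)) ≠ 0 := by exact_mod_cast hene
    obtain ⟨m, _, hm⟩ := hα.2 _ heimg hene'
    omega
  -- PF(H) is finite
  have hPFfin : (pseudoFrobenius H).Finite := by
    apply (Set.finite_Icc (-(e : ℤ)) (B : ℤ)).subset
    intro α hα
    exact Set.mem_Icc.2 ⟨hgeneg α hα, hub α hα.1⟩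
  set F := frobeniusNumber H with hFdef
  set A : Finset ℕ := hPFfin.toFinset.image (fun α => (F - α).toNat) with hAdef
  have hcard : A.card = (pseudoFrobenius H).ncard := by
    rw [hAdef, Finset.card_image_of_injOn, ← Set.ncard_coe_finset, Set.Finite.coe_toFinset]
    intro α hα β hβ hab
    simp only [Finset.mem_coe, Set.Finite.mem_toFinset] at hα hβ
    have h1 := hle α hα
    have h2 := hle β hβ
    simp only at hab
    omega
  -- membership in A
  have hAmem : ∀ α ∈ pseudoFrobenius H, (F - α).toNat ∈ A := by
    intro α hα
    exact Finset.mem_image.2 ⟨α, hPFfin.mem_toFinset.2 hα, rfl⟩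
  -- the two support sets
  set S₁ : Set ℕ := {n | ∃ a ∈ A, ∃ h ∈ H, a + h = n} with hS₁def
  set S₂ : Set ℕ := {n | ∃ a ∈ A, ∃ b ∈ A, ∃ h ∈ H, a + b + h = n} with hS₂def
  have hS₁ : ∀ h ∈ H, ∀ s ∈ S₁, h + s ∈ S₁ := by
    rintro h hh s ⟨a, ha, h', hh', rfl⟩
    exact ⟨a, ha, h' + h, H.add_mem hh' hh, by omega⟩
  have hS₂ : ∀ h ∈ H, ∀ s ∈ S₂, h + s ∈ S₂ := by
    rintro h hh s ⟨a, ha, b, hb, h', hh', rfl⟩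
    exact ⟨a, ha, b, hb, h' + h, H.add_mem hh' hh, by omega⟩
  -- the canonical ideal has support in S₁
  have hC : canonicalIdeal K H ≤ suppSubmodule K H S₁ hS₁ := by
    rw [canonicalIdeal, Submodule.span_le]
    rintro f ⟨α, hα, rfl⟩
    refine fun n hn => ?_
    rw [PowerSeries.coeff_X_pow]
    rw [if_neg]
    intro hne
    exact hn ⟨(F - α).toNat, hAmem α hα, 0, H.zero_mem, by omega⟩
  -- C * C has support in S₂
  have hCC : canonicalIdeal K H * canonicalIdeal K H ≤ suppSubmodule K H S₂ hS₂ := by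
    apply Submodule.mul_le.2
    intro f hf g hg
    have hf' := hC hf
    have hg' := hC hg
    refine fun n hn => ?_
    rw [PowerSeries.coeff_mul]
    apply Finset.sum_eq_zero
    rintro ⟨i, j⟩ hij
    rw [Finset.HasAntidiagonal.mem_antidiagonal] at hij
    by_cases hi : i ∈ S₁
    · have hj : j ∉ S₁ := by
        rintro ⟨b, hb, h₂, hh₂, rfl⟩
        obtain ⟨a, ha, h₁, hh₁, rfl⟩ := hi
        exact hn ⟨a, ha, b, hb, h₁ + h₂, H.add_mem hh₁ hh₂, by omega⟩
      simp [hg' j hj]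
    · simp [hf' i hi]
  -- main claim: every k < e is a sum of two elements of A
  have hmain : ∀ k < e, ∃ a ∈ A, ∃ b ∈ A, a + b = k := by
    intro k hk
    have hX : (PowerSeries.X : PowerSeries K) ^ k ∈
        canonicalIdeal K H * canonicalIdeal K H := by
      rw [hFFG]; trivial
    have hX' := hCC hX
    have hkS : k ∈ S₂ := by
      by_contra hkS
      have := (show ∀ n : ℕ, n ∉ S₂ → PowerSeries.coeff n ((PowerSeries.X : PowerSeries K) ^ k) = 0 from hX') k hkS
      rw [PowerSeries.coeff_X_pow, if_pos rfl] at this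
      exact one_ne_zero this
    obtain ⟨a, ha, b, hb, h, hh, habh⟩ := hkS
    have h0 : h = 0 := by
      by_contra h0
      have := helb ⟨hh, h0⟩
      omega
    exact ⟨a, ha, b, hb, by omega⟩
  -- e is a member of the Rohrbach set
  have hemem : e ∈ {n : ℕ | ∃ A : Finset ℕ, A.card = (pseudoFrobenius H).ncard ∧
      ∀ k < n, ∃ a ∈ A, ∃ b ∈ A, a + b = k} := ⟨A, hcard, hmain⟩
  -- the Rohrbach set is bounded above
  have hbdd : BddAbove {n : ℕ | ∃ A : Finset ℕ, A.card = (pseudoFrobenius H).ncard ∧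
      ∀ k < n, ∃ a ∈ A, ∃ b ∈ A, a + b = k} := by
    refine ⟨(pseudoFrobenius H).ncard * (pseudoFrobenius H).ncard, ?_⟩
    rintro n ⟨A', hcard', hA'⟩
    choose f hf g hg hfg using hA'
    have hcle : (Finset.range n).card ≤ (A' ×ˢ A').card := by
      apply Finset.card_le_card_of_injOn
        (fun k => if h : k < n then (f k h, g k h) else (0, 0))
      · intro k hk
        rw [Finset.coe_range, Set.mem_Iio] at hk
        simp only [dif_pos hk]
        exact Finset.mem_product.2 ⟨hf k hk, hg k hk⟩
      · intro k hk k' hk' hkk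
        rw [Finset.coe_range, Set.mem_Iio] at hk hk'
        simp only [dif_pos hk, dif_pos hk', Prod.mk.injEq] at hkk
        have h1 := hfg k hk
        have h2 := hfg k' hk'
        omega
    rw [Finset.card_range, Finset.card_product, hcard'] at hcle
    exact hcle
  exact le_csSup hbdd hemem
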